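/- arXiv:1209.1176 — 2 statements merged into one kernel-verified Lean document; each statement's English description precedes it below -/
import Mathlib

section
/- Let (G,m) be a d-target and u-v-w-x a 4-cycle of G with m(uv), m(wx) ≥ 1, and suppose m(δ(X)) ≥ d + 2 for every odd X ⊆ V(G) with |X|, |V(G)∖X| ≠ 1. Then the pair (G,m') obtained by switching on u-v-w-x-u (decreasing m on uv, wx by 1 and increasing m on vw, ux by 1) is again a d-target. -/
open Finset

/-- The set of edges of a multigraph (edges `E`, endpoints given by `ends`)
having exactly one end in the vertex set `X`. -/
def cutE {V E : Type*} [Fintype E] [DecidableEq V] (ends : E → V × V) (X : Finset V) :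
    Finset E :=
  univ.filter fun e => ((ends e).1 ∈ X ∧ (ends e).2 ∉ X) ∨ ((ends e).1 ∉ X ∧ (ends e).2 ∈ X)

/-- The set of edges incident with a vertex `v`. -/
def incE {V E : Type*} [Fintype E] [DecidableEq V] (ends : E → V × V) (v : V) : Finset E :=
  univ.filter fun e => (ends e).1 = v ∨ (ends e).2 = v

/-- Let `(G,m)` be a `d`-target and `u-v-w-x-u` a 4-cycle of `G` with `m(uv), m(wx) ≥ 1`,
and suppose `m(δ(X)) ≥ d + 2` for every odd `X ⊆ V(G)` with `|X|, |V(G)∖X| ≠ 1`. Then the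
pair `(G,m')` obtained by switching on `u-v-w-x-u` (decreasing `m` on `uv, wx` by 1 and
increasing it on `vw, ux` by 1) is again a `d`-target. -/
theorem switching_is_target
    {V E : Type*} [Fintype V] [Fintype E] [DecidableEq V] [DecidableEq E]
    (ends : E → V × V) (hloop : ∀ e, (ends e).1 ≠ (ends e).2)
    (hsimple : ∀ e f : E, ends e = ends f → e = f)
    (d : ℕ) (m : E → ℕ)
    (htv : ∀ v : V, ∑ e ∈ cutE ends {v}, m e = d)
    (htX : ∀ X : Finset V, Odd X.card → d ≤ ∑ e ∈ cutE ends X, m e)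
    (hbig : ∀ X : Finset V, Odd X.card → X.card ≠ 1 → (univ \ X).card ≠ 1 →
      d + 2 ≤ ∑ e ∈ cutE ends X, m e)
    (u v w x : V)
    (huv : u ≠ v) (huw : u ≠ w) (hux : u ≠ x) (hvw : v ≠ w) (hvx : v ≠ x) (hwx : w ≠ x)
    (euv evw ewx eux : E)
    (h1 : ends euv = (u, v)) (h2 : ends evw = (v, w))
    (h3 : ends ewx = (w, x)) (h4 : ends eux = (u, x))
    (hpos1 : 1 ≤ m euv) (hpos2 : 1 ≤ m ewx)
    (m' : E → ℕ)
    (hm'1 : m' euv = m euv - 1) (hm'2 : m' evw = m evw + 1)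
    (hm'3 : m' ewx = m ewx - 1) (hm'4 : m' eux = m eux + 1)
    (hm'5 : ∀ e : E, e ≠ euv → e ≠ evw → e ≠ ewx → e ≠ eux → m' e = m e) :
    (∀ z : V, ∑ e ∈ cutE ends {z}, m' e = d) ∧
      (∀ X : Finset V, Odd X.card → d ≤ ∑ e ∈ cutE ends X, m' e) := by
  have d12 : euv ≠ evw := by
    intro h; rw [h, h2] at h1; exact huv ((congrArg Prod.fst h1)).symm
  have d13 : euv ≠ ewx := by
    intro h; rw [h, h3] at h1; exact huw ((congrArg Prod.fst h1)).symm
  have d14 : euv ≠ eux := by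
    intro h; rw [h, h4] at h1; exact hvx ((congrArg Prod.snd h1)).symm
  have d23 : evw ≠ ewx := by
    intro h; rw [h, h3] at h2; exact hvw ((congrArg Prod.fst h2)).symm
  have d24 : evw ≠ eux := by
    intro h; rw [h, h4] at h2; exact huv ((congrArg Prod.fst h2))
  have d34 : ewx ≠ eux := by
    intro h; rw [h, h4] at h3; exact huw ((congrArg Prod.fst h3))
  have key : ∀ e, m' e + ((if e = euv then 1 else 0) + (if e = ewx then 1 else 0))
      = m e + ((if e = evw then 1 else 0) + (if e = eux then 1 else 0)) := by
    intro e
    by_cases he1 : e = euv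
    · subst he1; simp [hm'1, d12, d13, d14]; omega
    by_cases he2 : e = evw
    · subst he2; simp [hm'2, d12.symm, d23, d24]
    by_cases he3 : e = ewx
    · subst he3; simp [hm'3, d13.symm, d23.symm, d34]; omega
    by_cases he4 : e = eux
    · subst he4; simp [hm'4, d14.symm, d24.symm, d34.symm]
    simp [hm'5 e he1 he2 he3 he4, he1, he2, he3, he4]
  have hsum : ∀ s : Finset E,
      (∑ e ∈ s, m' e) + ((if euv ∈ s then 1 else 0) + (if ewx ∈ s then 1 else 0))
      = (∑ e ∈ s, m e) + ((if evw ∈ s then 1 else 0) + (if eux ∈ s then 1 else 0)) := by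
    intro s
    have h := Finset.sum_congr rfl (fun e (_ : e ∈ s) => key e)
    simpa [Finset.sum_add_distrib, Finset.sum_ite_eq' s,
      add_assoc, add_left_comm, add_comm] using h
  have mem_cut : ∀ (X : Finset V) (e : E) (a b : V), ends e = (a, b) →
      (e ∈ cutE ends X ↔ ((a ∈ X ∧ b ∉ X) ∨ (a ∉ X ∧ b ∈ X))) := by
    intro X e a b h
    simp [cutE, h]
  have two_card : ∀ (Y : Finset V) (a b : V), a ≠ b → a ∈ Y → b ∈ Y → Y.card ≠ 1 := by
    intro Y a b hab ha hb h
    rw [Finset.card_eq_one] at h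
    obtain ⟨c, rfl⟩ := h
    simp only [Finset.mem_singleton] at ha hb
    exact hab (ha.trans hb.symm)
  constructor
  · intro z
    have key2 := hsum (cutE ends {z})
    rw [htv z] at key2
    simp only [mem_cut {z} euv u v h1, mem_cut {z} ewx w x h3,
      mem_cut {z} evw v w h2, mem_cut {z} eux u x h4] at key2
    simp only [Finset.mem_singleton] at key2
    by_cases hu : u = z <;> by_cases hv : v = z <;> by_cases hw : w = z <;> by_cases hx : x = z <;>
      simp only [hu, hv, hw, hx, if_pos, if_neg, eq_self_iff_true, not_true, not_false_iff,
        and_true, and_false, true_and, false_and, or_false, false_or, if_true, if_false] at key2 <;>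
      first
        | omega
        | (exfalso; first
            | exact huv (hu.trans hv.symm) | exact huw (hu.trans hw.symm)
            | exact hux (hu.trans hx.symm) | exact hvw (hv.trans hw.symm)
            | exact hvx (hv.trans hx.symm) | exact hwx (hw.trans hx.symm))
  · intro X hodd
    have key2 := hsum (cutE ends X)
    simp only [mem_cut X euv u v h1, mem_cut X ewx w x h3,
      mem_cut X evw v w h2, mem_cut X eux u x h4] at key2
    have hd := htX X hodd
    by_cases hu : u ∈ X <;> by_cases hv : v ∈ X <;> by_cases hw : w ∈ X <;> by_cases hx : x ∈ X <;>
      simp only [hu, hv, hw, hx, not_true, not_false_iff, and_true, and_false, true_and,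
        false_and, or_false, false_or, if_true, if_false, if_pos, if_neg] at key2
    all_goals try omega
    -- remaining: the two Δ = -2 cases
    · -- u, x ∈ X; v, w ∉ X
      have hb := hbig X hodd (two_card X u x hux hu hx)
        (two_card (univ \ X) v w hvw (by simp [hv]) (by simp [hw]))
      omega
    · -- v, w ∈ X; u, x ∉ X
      have hb := hbig X hodd (two_card X v w hvw hv hw)
        (two_card (univ \ X) u x hux (by simp [hu]) (by simp [hx]))
      omega
end

section
/- Let F and F' be perfect matchings of a graph G, and let C be a union of components of the symmetric-difference subgraph of F and F'. Then (F ∩ E(C)) ∪ (F' ∖ E(C)) and (F' ∩ E(C)) ∪ (F ∖ E(C)) are both perfect matchings of G. -/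
open Finset

/-- Two edges meet if they share an end. -/
def meetsE {V E : Type*} (ends : E → V × V) (e f : E) : Prop :=
  (ends e).1 = (ends f).1 ∨ (ends e).1 = (ends f).2 ∨
    (ends e).2 = (ends f).1 ∨ (ends e).2 = (ends f).2

/-- `F` is a perfect matching: every vertex lies in exactly one edge of `F`. -/
def isPM {V E : Type*} (ends : E → V × V) (F : Finset E) : Prop :=
  ∀ v : V, ∃! e : E, e ∈ F ∧ ((ends e).1 = v ∨ (ends e).2 = v)

lemma meets_of_common {V E : Type*} (ends : E → V × V) {e f : E} {v : V}
    (he : (ends e).1 = v ∨ (ends e).2 = v) (hf : (ends f).1 = v ∨ (ends f).2 = v) :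
    meetsE ends e f := by
  unfold meetsE
  rcases he with h1 | h1 <;> rcases hf with h2 | h2 <;> simp [h1, h2]

lemma exchange_aux {V E : Type*} [DecidableEq E]
    (ends : E → V × V)
    (F F' : Finset E) (hF : isPM ends F) (hF' : isPM ends F')
    (S : Finset E) (hS : S ⊆ (F \ F') ∪ (F' \ F))
    (hclosed : ∀ e ∈ S, ∀ f ∈ ((F \ F') ∪ (F' \ F)) \ S, ¬ meetsE ends e f) :
    isPM ends ((F ∩ S) ∪ (F' \ S)) := by
  intro v
  obtain ⟨e, ⟨heF, hev⟩, hue⟩ := hF v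
  obtain ⟨e', ⟨he'F, he'v⟩, hue'⟩ := hF' v
  by_cases hS' : e' ∈ S
  · -- e' ∈ F' \ F, so e ≠ e', and e ∈ S
    have he'nF : e' ∉ F := by
      intro h
      have := hS hS'
      simp only [Finset.mem_union, Finset.mem_sdiff] at this
      tauto
    have hne : e ≠ e' := fun h => he'nF (h ▸ heF)
    have henF' : e ∉ F' := by
      intro h
      exact hne (hue' e ⟨h, hev⟩)
    have heS : e ∈ S := by
      by_contra h
      refine hclosed e' hS' e ?_ (meets_of_common ends he'v hev)
      simp only [Finset.mem_sdiff, Finset.mem_union]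
      exact ⟨Or.inl ⟨heF, henF'⟩, h⟩
    refine ⟨e, ⟨Finset.mem_union_left _ (Finset.mem_inter.2 ⟨heF, heS⟩), hev⟩, ?_⟩
    rintro f ⟨hf, hfv⟩
    rcases Finset.mem_union.1 hf with hf | hf
    · exact hue f ⟨(Finset.mem_inter.1 hf).1, hfv⟩
    · obtain ⟨hf1, hf2⟩ := Finset.mem_sdiff.1 hf
      exact absurd (hue' f ⟨hf1, hfv⟩ ▸ hS') hf2
  · refine ⟨e', ⟨Finset.mem_union_right _ (Finset.mem_sdiff.2 ⟨he'F, hS'⟩), he'v⟩, ?_⟩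
    rintro f ⟨hf, hfv⟩
    rcases Finset.mem_union.1 hf with hf | hf
    · obtain ⟨hf1, hf2⟩ := Finset.mem_inter.1 hf
      have hfe : f = e := hue f ⟨hf1, hfv⟩
      subst hfe
      -- f = e ∈ S ⊆ symdiff, f ∈ F so f ∈ F \ F'
      have hfnF' : f ∉ F' := by
        have := hS hf2
        simp only [Finset.mem_union, Finset.mem_sdiff] at this
        tauto
      have he'nF : e' ∉ F := fun h => hfnF' ((hue e' ⟨h, he'v⟩ : e' = f) ▸ he'F)
      exact absurd (meets_of_common ends hfv he'v)
        (hclosed f hf2 e' (by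
          simp only [Finset.mem_sdiff, Finset.mem_union]
          exact ⟨Or.inr ⟨he'F, he'nF⟩, hS'⟩))
    · exact hue' f ⟨(Finset.mem_sdiff.1 hf).1, hfv⟩

/-- Let `F` and `F'` be perfect matchings of a graph `G`, and let `S` be (the edge set of) a
union of components of the symmetric-difference subgraph of `F` and `F'` (that is,
`S ⊆ (F∖F') ∪ (F'∖F)` and no edge of `S` meets an edge of the symmetric difference outside
`S`). Then `(F ∩ S) ∪ (F' ∖ S)` and `(F' ∩ S) ∪ (F ∖ S)` are both perfect matchings. -/
theorem matching_exchange
    {V E : Type*} [Fintype V] [Fintype E] [DecidableEq V] [DecidableEq E]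
    (ends : E → V × V) (hloop : ∀ e, (ends e).1 ≠ (ends e).2)
    (F F' : Finset E) (hF : isPM ends F) (hF' : isPM ends F')
    (S : Finset E) (hS : S ⊆ (F \ F') ∪ (F' \ F))
    (hclosed : ∀ e ∈ S, ∀ f ∈ ((F \ F') ∪ (F' \ F)) \ S, ¬ meetsE ends e f) :
    isPM ends ((F ∩ S) ∪ (F' \ S)) ∧ isPM ends ((F' ∩ S) ∪ (F \ S)) := by
  refine ⟨exchange_aux ends F F' hF hF' S hS hclosed, ?_⟩
  rw [Finset.union_comm (F \ F')] at hS hclosed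
  exact exchange_aux ends F' F hF' hF S hS hclosed
end
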